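/- arXiv:1601.01950 — 3 statements merged into one kernel-verified Lean document; each statement's English description precedes it below -/
import Mathlib

section
/- Let T be a finite tree with degree sequence d_1, …, d_n. Then the number Y(T) of 5-vertex wye subtrees of T satisfies Y(T) ≤ 2·Σ_{v=1}^{n} d_v^{2+√3}. -/
open SimpleGraph Finset

/-- Number of subtrees (connected subgraphs, which in a tree are induced) of `G`
isomorphic to the pattern graph `H`. -/
noncomputable def copyCount {V : Type*} [Fintype V] {k : ℕ} (G : SimpleGraph V)
    (H : SimpleGraph (Fin k)) : ℕ :=
  Nat.card {s : Finset V // Nonempty (G.induce (s : Set V) ≃g H)}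

/-- The star `K_{1,4}` on 5 vertices, centered at `0`. -/
def starGraph5 : SimpleGraph (Fin 5) := SimpleGraph.fromRel (fun a _ => a = 0)

/-- The wye: a degree-3 vertex `0` with two leaves `1, 2` and a pendant path `0-3-4`. -/
def wyeGraph : SimpleGraph (Fin 5) :=
  SimpleGraph.fromEdgeSet {s(0, 1), s(0, 2), s(0, 3), s(3, 4)}

/-!
Every wye is the image of an embedding `f` of the pattern into `T`, and `f` is determined by the
dart `(f 0, f 3)` of `T` together with two neighbours `f 1, f 2` of its tail and one neighbour
`f 4` of its head; the automorphism exchanging the leaves `1, 2` shows that each wye yields two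
such embeddings. Hence `2 Y(T) ≤ ∑_{(x,y) dart} d_x² d_y`. Rooting the tree, every edge `{c, p}`
with `c` a child of `p` contributes `d_c² d_p + d_p² d_c ≤ 2 d_c^{2+√3} + 2 d_p^{1+√3}`, and
summing over the edges, each vertex is a child at most once and a parent at most `d_p` times.
-/

theorem sq_mul_add_mul_sq_le {x y : ℝ} (hx : 1 ≤ x) (hy : 1 ≤ y) :
    x ^ 2 * y + y ^ 2 * x ≤ 2 * x ^ (2 + √3) + 2 * y ^ (1 + √3) := by
  obtain ⟨a, ha, rfl⟩ : ∃ a, 0 ≤ a ∧ Real.exp a = x :=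
    ⟨Real.log x, Real.log_nonneg hx, Real.exp_log (by linarith)⟩
  obtain ⟨b, hb, rfl⟩ : ∃ b, 0 ≤ b ∧ Real.exp b = y :=
    ⟨Real.log y, Real.log_nonneg hy, Real.exp_log (by linarith)⟩
  have hs : √3 * √3 = 3 := Real.mul_self_sqrt (by norm_num)
  have hs0 : 0 ≤ √3 := Real.sqrt_nonneg 3
  have hmax (c : ℝ) (hc : c ≤ max (a * (2 + √3)) (b * (1 + √3))) :
      Real.exp c ≤ Real.exp a ^ (2 + √3) + Real.exp b ^ (1 + √3) := by
    rw [← Real.exp_mul, ← Real.exp_mul]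
    rcases le_max_iff.1 hc with h | h
    · linarith [Real.exp_le_exp.2 h, Real.exp_pos (b * (1 + √3))]
    · linarith [Real.exp_le_exp.2 h, Real.exp_pos (a * (2 + √3))]
  -- In logarithmic coordinates both monomials are dominated by the larger of the two powers;
  -- for `y² x` this is tight, as `1 / (2 + √3) + 2 / (1 + √3) = 1` exactly when `√3 ^ 2 = 3`.
  have hlin : 2 * a + b ≤ max (a * (2 + √3)) (b * (1 + √3)) ∧
      a + 2 * b ≤ max (a * (2 + √3)) (b * (1 + √3)) := by
    rcases le_total (b * (1 + √3)) (a * (2 + √3)) with h | h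
    · exact ⟨le_max_of_le_left (by nlinarith), le_max_of_le_left (by nlinarith)⟩
    · exact ⟨le_max_of_le_right (by nlinarith), le_max_of_le_right (by nlinarith)⟩
  have hsq (t : ℝ) : Real.exp (2 * t) = Real.exp t ^ 2 := by rw [sq, ← Real.exp_add, two_mul]
  have e₁ := hmax _ hlin.1
  have e₂ := hmax _ hlin.2
  rw [Real.exp_add, hsq] at e₁ e₂
  linarith

instance : DecidableRel wyeGraph.Adj := fun i j =>
  decidable_of_iff (s(i, j) ∈ ({s(0, 1), s(0, 2), s(0, 3), s(3, 4)} : Finset _) ∧ i ≠ j)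
    (by simp [wyeGraph])

def wyeSwap : wyeGraph ≃g wyeGraph where
  toEquiv := Equiv.swap 1 2
  map_rel_iff' := by decide

theorem wyeSwap_ne_refl : wyeSwap ≠ .refl := by
  intro h
  simpa [wyeSwap] using congrArg (· (1 : Fin 5)) h

namespace SimpleGraph

variable {V : Type*} {G : SimpleGraph V}

theorem IsAcyclic.eq_of_adj_of_dist_lt (hG : G.IsAcyclic) {r v w w' : V} (hr : G.Reachable r v)
    (hw : G.Adj v w) (hw' : G.Adj v w') (hlt : G.dist r w < G.dist r v)
    (hlt' : G.dist r w' < G.dist r v) : w = w' := by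
  classical
  obtain ⟨q, hq, -⟩ := hr.exists_path_of_dist
  have key {u : V} (hu : G.Adj v u) (hlt : G.dist r u < G.dist r v) : u = q.penultimate := by
    refine hG.eq_penultimate_of_adj_end hq hu ?_
    by_contra hnot
    obtain ⟨p, hp, hlen⟩ := (hr.trans hu.reachable).exists_path_of_dist
    have hv := hG.mem_support_of_ne_mem_support_of_adj_of_isPath hp hq hu.symm hnot
    have := (dist_le (p.takeUntil v hv)).trans (p.length_takeUntil_le_length hv)
    omega
  rw [key hw hlt, key hw' hlt']

variable [Fintype V]

theorem copyCount_mul_card_le_card_embedding {k : ℕ} {H : SimpleGraph (Fin k)}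
    (A : Finset (H ≃g H)) :
    _root_.copyCount G H * #A ≤ Nat.card (H ↪g G) := by
  let emb (p : {s : Finset V // Nonempty (G.induce (s : Set V) ≃g H)} × A) : H ↪g G :=
    (Embedding.induce _).comp (p.2.1.trans p.1.2.some.symm).toRelEmbedding
  have hrange p : Set.range (emb p) = p.1.1 := by
    simp only [emb, RelEmbedding.coe_trans, RelIso.coe_toRelEmbedding]
    rw [Set.range_comp, (p.2.1.trans p.1.2.some.symm).surjective.range_eq, Set.image_univ]
    exact Subtype.range_coe
  have hinj : Function.Injective emb := by
    rintro ⟨s, σ⟩ ⟨s', σ'⟩ h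
    obtain rfl : s = s' := Subtype.ext <| Finset.coe_injective <| by
      rw [← hrange (s, σ), ← hrange (s', σ'), h]
    have hσ (x : Fin k) : σ.1 x = σ'.1 x :=
      s.2.some.symm.injective (Subtype.ext (DFunLike.congr_fun h x))
    exact Prod.ext rfl (Subtype.ext (RelIso.ext hσ))
  calc _root_.copyCount G H * #A
      = Nat.card ({s : Finset V // Nonempty (G.induce (s : Set V) ≃g H)} × A) := by
        rw [Nat.card_prod, _root_.copyCount, Nat.card_eq_fintype_card (α := A), Fintype.card_coe]
    _ ≤ Nat.card (H ↪g G) := Nat.card_le_card_of_injective emb hinj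

theorem sum_darts_eq_sum_filter_add_symm {M : Type*} [AddCommMonoid M] [DecidableRel G.Adj]
    (p : G.Dart → Prop) [DecidablePred p] (hp : ∀ d, p d.symm ↔ ¬p d) (F : G.Dart → M) :
    ∑ d, F d = ∑ d with p d, (F d + F d.symm) := by
  rw [sum_add_distrib, ← sum_filter_add_sum_filter_not univ p F, sum_filter, sum_filter]
  congr 1
  rw [← Equiv.sum_comp (Dart.symm_involutive.toPerm _)]
  simp [hp, sum_filter]

theorem sum_darts_fst {M : Type*} [AddCommMonoid M] [DecidableRel G.Adj] (g : V → M) :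
    ∑ d : G.Dart, g d.fst = ∑ v, G.degree v • g v := by
  classical
  rw [← sum_fiberwise univ fun d : G.Dart => d.fst]
  refine sum_congr rfl fun v _ => ?_
  rw [sum_congr rfl fun d hd => by rw [(mem_filter.1 hd).2], sum_const]
  congr 1
  convert G.dart_fst_fiber_card_eq_degree v

theorem card_embedding_wye_le_sum_darts [DecidableRel G.Adj] :
    Nat.card (wyeGraph ↪g G) ≤ ∑ d : G.Dart, G.degree d.fst ^ 2 * G.degree d.snd := by
  have adj {i j : Fin 5} (f : wyeGraph ↪g G) (h : wyeGraph.Adj i j := by decide) :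
      G.Adj (f i) (f j) :=
    f.map_adj_iff.2 h
  let Tuples := Σ d : G.Dart, G.neighborSet d.fst × G.neighborSet d.fst × G.neighborSet d.snd
  let tuple (f : wyeGraph ↪g G) : Tuples :=
    ⟨⟨(f 0, f 3), adj f⟩, ⟨f 1, adj f⟩, ⟨f 2, adj f⟩, ⟨f 4, adj f⟩⟩
  have htuple : Function.Injective tuple := by
    refine .of_comp (f := fun t => ![t.1.fst, t.2.1, t.2.2.1, t.1.snd, t.2.2.2]) fun f g h => ?_
    ext i
    have hi := congrFun h i
    fin_cases i <;> exact hi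
  calc Nat.card (wyeGraph ↪g G)
      ≤ Nat.card Tuples :=
        Nat.card_le_card_of_injective tuple htuple
    _ = _ := by
      simp only [Tuples, Nat.card_eq_fintype_card, Fintype.card_sigma, Fintype.card_prod,
        card_neighborSet_eq_degree, sq, mul_assoc]

theorem IsTree.sum_darts_le [DecidableRel G.Adj] (hG : G.IsTree) {F : G.Dart → ℝ} {a b : V → ℝ}
    (ha : ∀ v, 0 ≤ a v) (hb : ∀ v, 0 ≤ b v)
    (hF : ∀ d : G.Dart, F d + F d.symm ≤ a d.snd + b d.fst) :
    ∑ d, F d ≤ ∑ v, (a v + G.degree v * b v) := by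
  classical
  obtain ⟨r⟩ := hG.connected.nonempty
  have hsymm (d : G.Dart) : G.dist r d.symm.fst < G.dist r d.symm.snd ↔
      ¬G.dist r d.fst < G.dist r d.snd := by
    have := hG.dist_ne_of_adj r d.adj
    simp only [Dart.symm_toProd, Prod.fst_swap, Prod.snd_swap]
    omega
  have hinj : Set.InjOn (fun d : G.Dart => d.snd)
      {d : G.Dart | G.dist r d.fst < G.dist r d.snd} := by
    intro d hd d' hd' (h : d.snd = d'.snd)
    have hfst : d.fst = d'.fst := hG.isAcyclic.eq_of_adj_of_dist_lt (hG.connected r _)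
      d.adj.symm (by rw [h]; exact d'.adj.symm) hd (by rw [h]; exact hd')
    exact Dart.ext _ _ (Prod.ext hfst h)
  calc ∑ d, F d = ∑ d : G.Dart with G.dist r d.fst < G.dist r d.snd, (F d + F d.symm) :=
        sum_darts_eq_sum_filter_add_symm _ hsymm F
    _ ≤ ∑ d : G.Dart with G.dist r d.fst < G.dist r d.snd, (a d.snd + b d.fst) :=
        sum_le_sum fun d _ => hF d
    _ ≤ ∑ v, a v + ∑ d : G.Dart, b d.fst := by
        rw [sum_add_distrib, ← sum_image (by simpa using hinj)]
        exact add_le_add (sum_le_univ_sum_of_nonneg ha)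
          (sum_le_univ_sum_of_nonneg fun d => hb d.fst)
    _ = ∑ v, (a v + G.degree v * b v) := by
        rw [sum_darts_fst, sum_add_distrib]
        simp only [nsmul_eq_mul]

theorem IsTree.sum_darts_sq_mul_le [DecidableRel G.Adj] (hG : G.IsTree) :
    ∑ d : G.Dart, (G.degree d.fst : ℝ) ^ 2 * G.degree d.snd ≤
      4 * ∑ v, (G.degree v : ℝ) ^ (2 + √3) := by
  have hdeg (d : G.Dart) : (1 : ℝ) ≤ G.degree d.fst :=
    Nat.one_le_cast.2 ((G.degree_pos_iff_exists_adj _).2 ⟨_, d.adj⟩)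
  calc ∑ d : G.Dart, (G.degree d.fst : ℝ) ^ 2 * G.degree d.snd
      ≤ ∑ v, (2 * (G.degree v : ℝ) ^ (2 + √3) + G.degree v * (2 * (G.degree v : ℝ) ^ (1 + √3))) :=
        hG.sum_darts_le (fun _ => by positivity) (fun _ => by positivity) fun d =>
          (add_comm _ _).trans_le (sq_mul_add_mul_sq_le (hdeg d.symm) (hdeg d))
    _ = 4 * ∑ v, (G.degree v : ℝ) ^ (2 + √3) := by
        rw [mul_sum]
        refine sum_congr rfl fun v _ => ?_
        rw [show (2 : ℝ) + √3 = 1 + (1 + √3) by ring,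
          Real.rpow_one_add' (Nat.cast_nonneg _) (by positivity)]
        ring

end SimpleGraph

theorem wye_le_sum_rpow_general {V : Type*} [Fintype V] (G : SimpleGraph V)
    [DecidableRel G.Adj] (hG : G.IsTree) :
    (_root_.copyCount G wyeGraph : ℝ) ≤ 2 * ∑ v, (G.degree v : ℝ) ^ (2 + Real.sqrt 3) := by
  classical
  have hcopies : _root_.copyCount G wyeGraph * 2 ≤ Nat.card (wyeGraph ↪g G) := by
    simpa [card_pair wyeSwap_ne_refl.symm] using
      copyCount_mul_card_le_card_embedding (G := G) {.refl, wyeSwap}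
  have hcount : (_root_.copyCount G wyeGraph : ℝ) * 2 ≤
      ∑ d : G.Dart, (G.degree d.fst : ℝ) ^ 2 * G.degree d.snd :=
    mod_cast hcopies.trans card_embedding_wye_le_sum_darts
  linarith [hG.sum_darts_sq_mul_le]

theorem wye_le_sum_rpow {V : Type*} [Fintype V] [DecidableEq V] (G : SimpleGraph V)
    [DecidableRel G.Adj] (hG : G.IsTree) :
    (_root_.copyCount G wyeGraph : ℝ) ≤ 2 * ∑ v, (G.degree v : ℝ) ^ (2 + Real.sqrt 3) :=
  wye_le_sum_rpow_general G hG
end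

section
/- For every ε < 2 + √3 and every constant C > 0, there exists a finite tree T with degree sequence d_1, …, d_n such that Y(T) > C·Σ_{v=1}^n d_v^{ε}. In particular, the exponent 2+√3 in the bound Y(T) ≤ 2·Σ_v d_v^{2+√3} is optimal. -/
open SimpleGraph Finset

/-- Degree of a vertex, stated without decidability assumptions. -/
noncomputable def deg {V : Type*} (G : SimpleGraph V) (v : V) : ℕ :=
  Nat.card (G.neighborSet v)

/-!
The witness is the depth-two tree whose root has `3a` children, each carrying `b ≈ a^α` leaves.
Splitting the children into three blocks of size `a`, a wye is obtained by choosing its two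
pendant leaves among the children of the first and second block and its pendant path through a
child of the third block and one of that child's leaves; these `a³b` wyes are pairwise distinct.
The degree sum `Σ d_v^ε` is of order `a^ε + a^(1+αε) + a^(1+α)`, which is `o(a^(3+α))` as soon
as `ε - 3 < α < 2/(ε - 1)`. Such an `α` exists exactly when `(ε - 2)² < 3`, i.e. `ε < 2 + √3`.
-/

namespace SimpleGraph

variable {V : Type*}

def parentGraph (par : V → Option V) : SimpleGraph V :=
  SimpleGraph.fromRel fun x y => par x = some y

/-- At a vertex of maximal height on a cycle, both cycle neighbours would have to be its parent. -/
theorem parentGraph_isAcyclic (par : V → Option V) (h : V → ℕ)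
    (hpar : ∀ x y, par x = some y → h y < h x) : (parentGraph par).IsAcyclic := by
  classical
  intro v c hc
  obtain ⟨u, hu, hmax⟩ := c.support.toFinset.exists_max_image h ⟨v, by simp⟩
  rw [List.mem_toFinset] at hu
  set c' := c.rotate u hu
  have hc' : c'.IsCycle := hc.rotate hu
  have toParent : ∀ w ∈ c'.support, (parentGraph par).Adj u w → par u = some w := by
    rintro w hw ⟨-, hpw | hpw⟩
    · exact hpw
    · have := hmax w (by simpa [c', Walk.mem_support_rotate_iff] using hw)
      exact absurd (hpar w u hpw) (by omega)
  refine hc'.snd_ne_penultimate (Option.some_injective _ ?_)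
  rw [← toParent _ (c'.getVert_mem_support 1) (c'.adj_snd hc'.not_nil),
    ← toParent _ (c'.getVert_mem_support _) (c'.adj_penultimate hc'.not_nil).symm]

lemma Iso.deg_apply {W : Type*} {G : SimpleGraph V} {G' : SimpleGraph W} (e : G ≃g G') (v : V) :
    deg G' (e v) = deg G v :=
  Nat.card_congr (e.mapNeighborSet v).symm

end SimpleGraph

section DepthTwoTree

variable (ι κ : Type*)

/-- Vertices of a depth-two rooted tree: the root `none`, the children `some (i, none)` and the
grandchildren `some (i, some j)` below child `i`. -/
abbrev DepthTwo := Option (ι × Option κ)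

variable {ι κ}

def DepthTwo.parent : DepthTwo ι κ → Option (DepthTwo ι κ)
  | none => none
  | some (_, none) => some none
  | some (i, some _) => some (some (i, none))

def DepthTwo.height : DepthTwo ι κ → ℕ
  | none => 0
  | some (_, none) => 1
  | some (_, some _) => 2

variable (ι κ)

def depthTwoTree : SimpleGraph (DepthTwo ι κ) := parentGraph DepthTwo.parent

variable {ι κ}

lemma depthTwoTree_neighborSet_root :
    (depthTwoTree ι κ).neighborSet none = Set.range fun i => some (i, none) := by
  ext (_ | ⟨i, _ | j⟩) <;> simp [depthTwoTree, parentGraph, DepthTwo.parent]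

lemma depthTwoTree_neighborSet_child (i : ι) :
    (depthTwoTree ι κ).neighborSet (some (i, none)) =
      insert none (Set.range fun j => some (i, some j)) := by
  ext (_ | ⟨i', _ | j⟩) <;> simp [depthTwoTree, parentGraph, DepthTwo.parent, eq_comm]

lemma depthTwoTree_neighborSet_leaf (i : ι) (j : κ) :
    (depthTwoTree ι κ).neighborSet (some (i, some j)) = {some (i, none)} := by
  ext (_ | ⟨i', _ | j'⟩) <;> simp [depthTwoTree, parentGraph, DepthTwo.parent, eq_comm]

lemma deg_depthTwoTree_root : deg (depthTwoTree ι κ) none = Nat.card ι := by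
  rw [deg, depthTwoTree_neighborSet_root, Nat.card_range_of_injective]
  intro i i' h
  simpa using h

lemma deg_depthTwoTree_child [Finite κ] (i : ι) :
    deg (depthTwoTree ι κ) (some (i, none)) = Nat.card κ + 1 := by
  rw [deg, depthTwoTree_neighborSet_child, Nat.card_coe_set_eq, Set.ncard_insert_of_notMem,
    ← Nat.card_coe_set_eq, Nat.card_range_of_injective]
  · intro j j' h
    simpa using h
  · simp

lemma deg_depthTwoTree_leaf (i : ι) (j : κ) :
    deg (depthTwoTree ι κ) (some (i, some j)) = 1 := by
  rw [deg, depthTwoTree_neighborSet_leaf, Nat.card_unique]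

lemma one_le_deg_depthTwoTree [Finite ι] [Nonempty ι] [Finite κ] (v : DepthTwo ι κ) :
    1 ≤ deg (depthTwoTree ι κ) v := by
  rcases v with _ | ⟨i, _ | j⟩
  · rw [deg_depthTwoTree_root]
    exact Nat.card_pos
  · simp [deg_depthTwoTree_child]
  · simp [deg_depthTwoTree_leaf]

lemma depthTwoTree_connected : (depthTwoTree ι κ).Connected := by
  have adj_root : ∀ i, (depthTwoTree ι κ).Adj none (some (i, none)) := fun i => by
    simp [depthTwoTree, parentGraph, DepthTwo.parent]
  have adj_child : ∀ i j, (depthTwoTree ι κ).Adj (some (i, none)) (some (i, some j)) :=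
    fun i j => by simp [depthTwoTree, parentGraph, DepthTwo.parent]
  refine (connected_iff_exists_forall_reachable _).mpr ⟨none, ?_⟩
  rintro (_ | ⟨i, _ | j⟩)
  · rfl
  · exact (adj_root i).reachable
  · exact (adj_root i).reachable.trans (adj_child i j).reachable

lemma depthTwoTree_isTree : (depthTwoTree ι κ).IsTree :=
  ⟨depthTwoTree_connected, parentGraph_isAcyclic _ DepthTwo.height <| by
    rintro (_ | ⟨i, _ | j⟩) y h <;> cases h <;> simp [DepthTwo.height]⟩

lemma sum_deg_depthTwoTree_rpow [Fintype ι] [Fintype κ] (t : ℝ) :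
    ∑ v, (deg (depthTwoTree ι κ) v : ℝ) ^ t =
      (Nat.card ι : ℝ) ^ t + Nat.card ι * ((Nat.card κ : ℝ) + 1) ^ t +
        Nat.card ι * Nat.card κ := by
  simp [Fintype.sum_option, Fintype.sum_prod_type, deg_depthTwoTree_root,
    deg_depthTwoTree_child, deg_depthTwoTree_leaf]
  ring

end DepthTwoTree

lemma card_le_copyCount_of_injective_range {V P : Type*} [Fintype V] {k : ℕ}
    {G : SimpleGraph V} {H : SimpleGraph (Fin k)} (φ : P → H ↪g G)
    (hφ : Function.Injective fun p => Set.range (φ p)) :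
    Nat.card P ≤ _root_.copyCount G H := by
  classical
  refine Nat.card_le_card_of_injective (fun p => ⟨(Set.range (φ p)).toFinset, by
      rw [Set.coe_toFinset]; exact ⟨(φ p).isoInduceRange.symm⟩⟩) fun p q hpq => hφ ?_
  simpa using congrArg (fun s => (s.1 : Set V)) hpq

section Wye

variable {α κ : Type*}

def wyeVertices (x y z : α) (j : κ) : Fin 5 → DepthTwo (Fin 3 × α) κ :=
  ![none, some ((0, x), none), some ((1, y), none), some ((2, z), none), some ((2, z), some j)]

def wyeEmbedding (x y z : α) (j : κ) : wyeGraph ↪g depthTwoTree (Fin 3 × α) κ where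
  toFun := wyeVertices x y z j
  inj' a b h := by
    fin_cases a <;> fin_cases b <;> simp_all [wyeVertices]
  map_rel_iff' {a b} := by
    change (depthTwoTree _ _).Adj (wyeVertices x y z j a) (wyeVertices x y z j b) ↔ _
    fin_cases a <;> fin_cases b <;>
      simp [wyeVertices, depthTwoTree, parentGraph, DepthTwo.parent, wyeGraph]

@[simp]
lemma coe_wyeEmbedding (x y z : α) (j : κ) : ⇑(wyeEmbedding x y z j) = wyeVertices x y z j :=
  rfl

lemma range_wyeVertices_injective : Function.Injective fun p : α × α × α × κ =>
    Set.range (wyeVertices p.1 p.2.1 p.2.2.1 p.2.2.2) := by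
  rintro ⟨x, y, z, j⟩ ⟨x', y', z', j'⟩ h
  have mem : ∀ i, ∃ i', wyeVertices x' y' z' j' i' = wyeVertices x y z j i := fun i =>
    (congrArg (wyeVertices x y z j i ∈ ·) h).mp ⟨i, rfl⟩
  obtain ⟨i₁, h₁⟩ := mem 1
  obtain ⟨i₂, h₂⟩ := mem 2
  obtain ⟨i₄, h₄⟩ := mem 4
  have hx : x' = x := by fin_cases i₁ <;> simp_all [wyeVertices]
  have hy : y' = y := by fin_cases i₂ <;> simp_all [wyeVertices]
  have hzj : z' = z ∧ j' = j := by fin_cases i₄ <;> simp_all [wyeVertices]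
  simp [hx, hy, hzj]

lemma card_pow_mul_le_copyCount_wye {V : Type*} [Fintype V]
    {G : SimpleGraph V} (e : depthTwoTree (Fin 3 × α) κ ↪g G) :
    Nat.card α ^ 3 * Nat.card κ ≤ _root_.copyCount G wyeGraph := by
  have := card_le_copyCount_of_injective_range
    (fun p : α × α × α × κ => e.comp (wyeEmbedding p.1 p.2.1 p.2.2.1 p.2.2.2))
    fun p q h => range_wyeVertices_injective <| Set.image_injective.mpr e.injective <| by
      simpa [Set.range_comp] using h
  simpa [Nat.card_prod, pow_succ, mul_assoc] using this

end Wye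

open Filter

lemma eventually_mul_rpow_lt_rpow (c : ℝ) {s t : ℝ} (hst : s < t) :
    ∀ᶠ x : ℝ in atTop, c * x ^ s < x ^ t := by
  have hlim : Tendsto (fun x : ℝ => c * x ^ (-(t - s))) atTop (nhds 0) := by
    simpa using (tendsto_rpow_neg_atTop (sub_pos.mpr hst)).const_mul c
  filter_upwards [hlim.eventually_lt_const one_pos, eventually_gt_atTop 0] with x hx hx0
  calc c * x ^ s = c * x ^ (-(t - s)) * x ^ t := by
        rw [mul_assoc, ← Real.rpow_add hx0]; ring_nf
    _ < 1 * x ^ t := by gcongr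
    _ = x ^ t := one_mul _

lemma sub_three_lt_two_div_sub_one {ε : ℝ} (h3 : 3 ≤ ε) (hε : ε < 2 + √3) :
    ε - 3 < 2 / (ε - 1) := by
  rw [lt_div_iff₀ (by linarith)]
  nlinarith [Real.sq_sqrt (show (0 : ℝ) ≤ 3 by norm_num)]

lemma eventually_mul_rpow_sum_add_cube_lt {ε α : ℝ} (C : ℝ) (hε : ε < 3 + α)
    (hαε : α * (ε - 1) < 2) (hα : 0 < α) : ∀ᶠ x : ℝ in atTop,
      C * (3 ^ ε * x ^ ε + 3 * 2 ^ ε * x ^ (1 + α * ε) + 3 * x ^ (1 + α)) + x ^ 3 <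
        x ^ (3 + α) := by
  filter_upwards [eventually_mul_rpow_lt_rpow (4 * C * 3 ^ ε) hε,
    eventually_mul_rpow_lt_rpow (4 * C * 3 * 2 ^ ε) (show 1 + α * ε < 3 + α by linarith),
    eventually_mul_rpow_lt_rpow (4 * C * 3) (show 1 + α < 3 + α by linarith),
    eventually_mul_rpow_lt_rpow 4 (show (3 : ℝ) < 3 + α by linarith)]
    with x hroot hchildren hgrandchildren hcube
  rw [Real.rpow_ofNat] at hcube
  linarith

/-- With `a = N` and `b = ⌊N^α⌋₊` for large `N`, where `ε - 3 < α < 2/(ε - 1)`. -/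
lemma exists_nat_mul_rpow_sum_lt_cube_mul {ε : ℝ} (h3 : 3 ≤ ε) (hε : ε < 2 + √3) (C : ℝ)
    (hC : 0 < C) : ∃ a b : ℕ, 0 < a ∧
      C * ((3 * a : ℝ) ^ ε + 3 * a * ((b : ℝ) + 1) ^ ε + 3 * a * b) < a ^ 3 * b := by
  obtain ⟨α, hαlo, hαhi⟩ := exists_between (sub_three_lt_two_div_sub_one h3 hε)
  have hα : 0 < α := by linarith
  have hαε : α * (ε - 1) < 2 := by rwa [lt_div_iff₀ (by linarith)] at hαhi
  have hlarge := (eventually_ge_atTop 1).and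
    (eventually_mul_rpow_sum_add_cube_lt C (by linarith : ε < 3 + α) hαε hα)
  obtain ⟨N, hN1, hlower⟩ := ((tendsto_natCast_atTop_atTop (R := ℝ)).eventually hlarge).exists
  set x : ℝ := (N : ℝ)
  have hx0 : 0 < x := by linarith
  have hxα : 1 ≤ x ^ α := Real.one_le_rpow hN1 hα.le
  refine ⟨N, ⌊x ^ α⌋₊, Nat.cast_pos.mp hx0, ?_⟩
  have hb_le : (⌊x ^ α⌋₊ : ℝ) ≤ x ^ α := Nat.floor_le (by positivity)
  have hb_gt : x ^ α - 1 < ⌊x ^ α⌋₊ := by linarith [Nat.lt_floor_add_one (x ^ α)]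
  have hpow : ∀ s : ℝ, x * x ^ s = x ^ (1 + s) := fun s => by
    rw [Real.rpow_add hx0, Real.rpow_one]
  have hleaves : ((⌊x ^ α⌋₊ : ℝ) + 1) ^ ε ≤ 2 ^ ε * x ^ (α * ε) := by
    rw [Real.rpow_mul hx0.le, ← Real.mul_rpow (by norm_num) (by positivity)]
    exact Real.rpow_le_rpow (by positivity) (by linarith) (by linarith)
  have hchildren : 3 * x * ((⌊x ^ α⌋₊ : ℝ) + 1) ^ ε ≤ 3 * 2 ^ ε * x ^ (1 + α * ε) := by
    rw [← hpow]
    nlinarith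
  have hgrandchildren : 3 * x * (⌊x ^ α⌋₊ : ℝ) ≤ 3 * x ^ (1 + α) := by
    rw [← hpow]
    nlinarith
  calc C * ((3 * x) ^ ε + 3 * x * ((⌊x ^ α⌋₊ : ℝ) + 1) ^ ε + 3 * x * ⌊x ^ α⌋₊)
      ≤ C * (3 ^ ε * x ^ ε + 3 * 2 ^ ε * x ^ (1 + α * ε) + 3 * x ^ (1 + α)) := by
        rw [Real.mul_rpow (by norm_num) hx0.le]
        gcongr C * (_ + ?_ + ?_)
    _ < x ^ 3 * (x ^ α - 1) := by
        have hsplit : x ^ (3 + α) = x ^ 3 * x ^ α := by rw [Real.rpow_add hx0, Real.rpow_ofNat]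
        linarith
    _ < x ^ 3 * ⌊x ^ α⌋₊ := by gcongr

theorem exponent_optimal (ε : ℝ) (hε : ε < 2 + Real.sqrt 3) (C : ℝ) (hC : 0 < C) :
    ∃ (n : ℕ) (G : SimpleGraph (Fin n)), G.IsTree ∧
      C * ∑ v, (deg G v : ℝ) ^ ε < (_root_.copyCount G wyeGraph : ℝ) := by
  have hε₃ : max ε 3 < 2 + √3 :=
    max_lt hε (by linarith [(Real.lt_sqrt zero_le_one).mpr (show (1 : ℝ) ^ 2 < 3 by norm_num)])
  obtain ⟨a, b, ha, hab⟩ := exists_nat_mul_rpow_sum_lt_cube_mul (le_max_right ε 3) hε₃ C hC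
  have : NeZero a := ⟨ha.ne'⟩
  set T := depthTwoTree (Fin 3 × Fin a) (Fin b)
  let e := T.overFinIso rfl
  refine ⟨_, _, e.isTree_iff.mp depthTwoTree_isTree, ?_⟩
  -- all degrees are at least `1`, so raising the exponent to `max ε 3` can only increase the sum
  have hdeg : ∑ v, (deg (T.overFin rfl) v : ℝ) ^ ε ≤ ∑ v, (deg T v : ℝ) ^ max ε 3 := by
    rw [← Fintype.sum_equiv e.toEquiv _ _ fun v =>
      congrArg (fun n : ℕ => (n : ℝ) ^ ε) (e.deg_apply v).symm]
    exact Finset.sum_le_sum fun v _ => Real.rpow_le_rpow_of_exponent_le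
      (by exact_mod_cast one_le_deg_depthTwoTree v) (le_max_left ε 3)
  have hcount := card_pow_mul_le_copyCount_wye e.toEmbedding
  rw [sum_deg_depthTwoTree_rpow] at hdeg
  simp only [Nat.card_eq_fintype_card, Fintype.card_prod, Fintype.card_fin] at hdeg hcount
  push_cast at hdeg
  calc C * ∑ v, (deg (T.overFin rfl) v : ℝ) ^ ε ≤ C * _ := mul_le_mul_of_nonneg_left hdeg hC.le
    _ < a ^ 3 * b := hab
    _ ≤ _ := by exact_mod_cast hcount
end

section
/- Let T be a rooted tree at vertex r, with all edges oriented away from r, and for each vertex v let A(v) be the set of out-neighbors of v. Then Y(T) = Σ_{v} Σ_{u ∈ A(v)} [ binomial(d(u)−1, 2)(d(v)−1) + binomial(d(v)−1, 2)(d(u)−1) ]. -/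
/-!
A wye in a tree is pinned down by its oriented spine `(a, b)`, from its vertex of degree 3 to its
vertex of degree 2, together with a further neighbour `w` of `b` and a pair `{x, y}` of further
neighbours of `a`. Since a tree has neither triangles nor 4-cycles, every such choice spans an
induced wye, and the vertex set gives the choice back: `a` and `b` are its only vertices with three
and two neighbours inside it. Hence `Y(T)` is the sum of `C(d(a) - 1, 2) (d(b) - 1)` over the
ordered edges `(a, b)`, and rooting the tree orients each edge from parent to child in exactly one
way.
-/

open SimpleGraph Finset

namespace SimpleGraph

variable {V W : Type*} {G : SimpleGraph V}

lemma nonempty_induce_iso_iff {H : SimpleGraph W} {s : Set V} :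
    Nonempty (G.induce s ≃g H) ↔ ∃ f : H ↪g G, Set.range f = s := by
  constructor
  · rintro ⟨e⟩
    refine ⟨(Embedding.induce s).comp e.symm.toEmbedding, ?_⟩
    rw [Embedding.coe_comp, Set.range_comp, RelIso.coe_toRelEmbedding, e.symm.surjective.range_eq,
      Set.image_univ]
    exact Subtype.range_coe
  · rintro ⟨f, rfl⟩
    exact ⟨f.isoInduceRange.symm⟩

lemma IsAcyclic.not_adj_of_isPath (hG : G.IsAcyclic) {u v : V} {p : G.Walk u v}
    (hp : p.IsPath) (hlen : 2 ≤ p.length) : ¬ G.Adj u v := fun huv => by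
  have := congrArg (fun q : G.Path u v => q.1.length)
    ((hG.subsingleton_path u v).elim ⟨p, hp⟩ (Path.singleton huv))
  simp at this
  omega

lemma IsAcyclic.not_adj_of_adj_of_adj (hG : G.IsAcyclic) {a b c : V} (hab : G.Adj a b)
    (hbc : G.Adj b c) (hac : a ≠ c) : ¬ G.Adj a c :=
  hG.not_adj_of_isPath (p := .cons hab (.cons hbc .nil)) (by simp [hab.ne, hbc.ne, hac]) le_rfl

lemma IsAcyclic.not_adj_of_adj_of_adj_of_adj (hG : G.IsAcyclic) {a b c d : V} (hab : G.Adj a b)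
    (hbc : G.Adj b c) (hcd : G.Adj c d) (hac : a ≠ c) (hbd : b ≠ d) (had : a ≠ d) :
    ¬ G.Adj a d :=
  hG.not_adj_of_isPath (p := .cons hab (.cons hbc (.cons hcd .nil)))
    (by simp [hab.ne, hbc.ne, hcd.ne, hac, hbd, had]) (by simp)

theorem IsTree.sum_adj_eq_sum_children [Fintype V] [DecidableRel G.Adj] {M : Type*}
    [AddCommMonoid M] (hG : G.IsTree) (r : V) (f : V → V → M) :
    ∑ p ∈ univ.filter (fun p : V × V => G.Adj p.1 p.2), f p.1 p.2 =
      ∑ v, ∑ u ∈ univ.filter (fun u => G.Adj v u ∧ G.dist r u = G.dist r v + 1),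
        (f v u + f u v) := by
  let child v u := G.Adj v u ∧ G.dist r u = G.dist r v + 1
  have hsplit : ∀ v u, (if G.Adj v u then f v u else 0) =
      (if child v u then f v u else 0) + (if child u v then f v u else 0) := by
    intro v u
    by_cases h : G.Adj v u
    · rcases hG.dist_eq_dist_add_one_of_adj r h with hd | hd
      · rw [if_pos h, if_neg fun hc => by have := hc.2; omega, if_pos ⟨h.symm, hd⟩, zero_add]
      · rw [if_pos h, if_pos ⟨h, hd⟩, if_neg fun hc => by have := hc.2; omega, add_zero]
    · rw [if_neg h, if_neg fun hc => h hc.1, if_neg fun hc => h hc.1.symm, add_zero]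
  calc ∑ p ∈ univ.filter (fun p : V × V => G.Adj p.1 p.2), f p.1 p.2
      = ∑ v, ∑ u, if G.Adj v u then f v u else 0 := by
        rw [sum_filter, Fintype.sum_prod_type]
    _ = ∑ v, ∑ u, (if child v u then f v u else 0) +
          ∑ v, ∑ u, (if child v u then f u v else 0) := by
        simp only [hsplit, sum_add_distrib]
        rw [sum_comm (f := fun v u => if child u v then f v u else 0)]
    _ = _ := by
        rw [← sum_add_distrib]
        simp only [sum_filter, ← sum_add_distrib, ite_add_ite, add_zero]
        rfl

/-- `a` is the centre of the wye, `b` its neck, `w` its tail and `x`, `y` its two leaves. -/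
structure IsWye (G : SimpleGraph V) (a b w x y : V) : Prop where
  adj_ab : G.Adj a b
  adj_bw : G.Adj b w
  adj_ax : G.Adj a x
  adj_ay : G.Adj a y
  w_ne_a : w ≠ a
  x_ne_b : x ≠ b
  y_ne_b : y ≠ b
  x_ne_y : x ≠ y

namespace IsWye

variable {a b w x y : V}

lemma not_adj (hG : G.IsAcyclic) (h : G.IsWye a b w x y) :
    ¬ G.Adj a w ∧ ¬ G.Adj b x ∧ ¬ G.Adj b y ∧ ¬ G.Adj w x ∧ ¬ G.Adj w y ∧ ¬ G.Adj x y := by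
  have hbx := hG.not_adj_of_adj_of_adj h.adj_ab.symm h.adj_ax h.x_ne_b.symm
  have hby := hG.not_adj_of_adj_of_adj h.adj_ab.symm h.adj_ay h.y_ne_b.symm
  have hwx : w ≠ x := fun e => hbx (e ▸ h.adj_bw)
  have hwy : w ≠ y := fun e => hby (e ▸ h.adj_bw)
  exact ⟨hG.not_adj_of_adj_of_adj h.adj_ab h.adj_bw h.w_ne_a.symm, hbx, hby,
    hG.not_adj_of_adj_of_adj_of_adj h.adj_bw.symm h.adj_ab.symm h.adj_ax h.w_ne_a h.x_ne_b.symm hwx,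
    hG.not_adj_of_adj_of_adj_of_adj h.adj_bw.symm h.adj_ab.symm h.adj_ay h.w_ne_a h.y_ne_b.symm hwy,
    hG.not_adj_of_adj_of_adj h.adj_ax.symm h.adj_ay h.x_ne_y⟩

lemma tail_ne (hG : G.IsAcyclic) (h : G.IsWye a b w x y) : w ≠ x ∧ w ≠ y :=
  ⟨fun e => (h.not_adj hG).2.1 (e ▸ h.adj_bw), fun e => (h.not_adj hG).2.2.1 (e ▸ h.adj_bw)⟩

lemma of_embedding (f : wyeGraph ↪g G) : G.IsWye (f 0) (f 3) (f 4) (f 1) (f 2) where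
  adj_ab := f.map_adj_iff.2 (by simp [wyeGraph])
  adj_bw := f.map_adj_iff.2 (by simp [wyeGraph])
  adj_ax := f.map_adj_iff.2 (by simp [wyeGraph])
  adj_ay := f.map_adj_iff.2 (by simp [wyeGraph])
  w_ne_a := f.injective.ne (by decide)
  x_ne_b := f.injective.ne (by decide)
  y_ne_b := f.injective.ne (by decide)
  x_ne_y := f.injective.ne (by decide)

lemma exists_embedding (hG : G.IsAcyclic) (h : G.IsWye a b w x y) :
    ∃ f : wyeGraph ↪g G, Set.range f = {a, b, w, x, y} := by
  obtain ⟨naw, nbx, nby, nwx, nwy, nxy⟩ := h.not_adj hG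
  obtain ⟨hwx, hwy⟩ := h.tail_ne hG
  set f : Fin 5 → V := ![a, x, y, b, w]
  have hinj : Function.Injective f := by
    intro i j
    fin_cases i <;> fin_cases j <;>
      simp [f, h.adj_ab.ne, h.adj_bw.ne, h.adj_ax.ne, h.adj_ay.ne, h.w_ne_a, h.x_ne_b, h.y_ne_b,
        h.x_ne_y, hwx, hwy, h.adj_ab.ne', h.adj_bw.ne', h.adj_ax.ne', h.adj_ay.ne', h.w_ne_a.symm,
        h.x_ne_b.symm, h.y_ne_b.symm, h.x_ne_y.symm, hwx.symm, hwy.symm]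
  have hadj : ∀ i j, G.Adj (f i) (f j) ↔ wyeGraph.Adj i j := by
    intro i j
    fin_cases i <;> fin_cases j <;>
      simp [f, wyeGraph, h.adj_ab, h.adj_bw, h.adj_ax, h.adj_ay,
        naw, nbx, nby, nwx, nwy, nxy, adj_comm]
  refine ⟨⟨⟨f, hinj⟩, hadj _ _⟩, ?_⟩
  ext v
  simp only [RelEmbedding.coe_mk, Function.Embedding.coeFn_mk, Matrix.range_cons,
    Matrix.range_empty, Set.union_empty, Set.union_singleton, Set.union_insert, Set.mem_insert_iff,
    eq_comm, Set.mem_singleton_iff, f]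
  tauto

variable [DecidableEq V]

lemma card_neighbors_center (h : G.IsWye a b w x y) : #({b, x, y} : Finset V) = 3 :=
  card_eq_three.2 ⟨b, x, y, h.x_ne_b.symm, h.y_ne_b.symm, h.x_ne_y, rfl⟩

lemma card_neighbors_neck (h : G.IsWye a b w x y) : #({a, w} : Finset V) = 2 :=
  card_pair h.w_ne_a.symm

variable [DecidableRel G.Adj]

lemma filter_adj (hG : G.IsAcyclic) (h : G.IsWye a b w x y) :
    ({a, b, w, x, y} : Finset V).filter (G.Adj a) = {b, x, y} ∧
    ({a, b, w, x, y} : Finset V).filter (G.Adj b) = {a, w} ∧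
    ({a, b, w, x, y} : Finset V).filter (G.Adj w) = {b} ∧
    ({a, b, w, x, y} : Finset V).filter (G.Adj x) = {a} ∧
    ({a, b, w, x, y} : Finset V).filter (G.Adj y) = {a} := by
  obtain ⟨naw, nbx, nby, nwx, nwy, nxy⟩ := h.not_adj hG
  refine ⟨?_, ?_, ?_, ?_, ?_⟩ <;>
    simp [filter_insert, filter_singleton, h.adj_ab, h.adj_bw, h.adj_ax, h.adj_ay,
      naw, nbx, nby, nwx, nwy, nxy, adj_comm]

lemma eq_center (hG : G.IsAcyclic) (h : G.IsWye a b w x y) {v : V}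
    (hv : v ∈ ({a, b, w, x, y} : Finset V))
    (h3 : #(({a, b, w, x, y} : Finset V).filter (G.Adj v)) = 3) : v = a := by
  obtain ⟨-, fb, fw, fx, fy⟩ := h.filter_adj hG
  simp only [mem_insert, mem_singleton] at hv
  rcases hv with rfl | rfl | rfl | rfl | rfl
  · rfl
  all_goals simp_all [h.card_neighbors_neck]

lemma eq_neck (hG : G.IsAcyclic) (h : G.IsWye a b w x y) {v : V}
    (hv : v ∈ ({a, b, w, x, y} : Finset V))
    (h2 : #(({a, b, w, x, y} : Finset V).filter (G.Adj v)) = 2) : v = b := by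
  obtain ⟨fa, -, fw, fx, fy⟩ := h.filter_adj hG
  simp only [mem_insert, mem_singleton] at hv
  rcases hv with rfl | rfl | rfl | rfl | rfl
  any_goals simp_all [h.card_neighbors_center]

lemma eq_of_vertices_eq (hG : G.IsAcyclic) {a' b' w' x' y' : V} (h : G.IsWye a b w x y)
    (h' : G.IsWye a' b' w' x' y')
    (hs : ({a, b, w, x, y} : Finset V) = {a', b', w', x', y'}) :
    a = a' ∧ b = b' ∧ w = w' ∧ ({x, y} : Finset V) = {x', y'} := by
  obtain ⟨fa, fb, -, -, -⟩ := h'.filter_adj hG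
  have ha : a' = a := h.eq_center hG (by simp [hs]) (by rw [hs, fa, h'.card_neighbors_center])
  have hb : b' = b := h.eq_neck hG (by simp [hs]) (by rw [hs, fb, h'.card_neighbors_neck])
  subst a' b'
  obtain ⟨fa', fb', -, -, -⟩ := h.filter_adj hG
  rw [← hs, fa'] at fa
  rw [← hs, fb'] at fb
  refine ⟨rfl, rfl, ?_, ?_⟩
  · have hw : w ∈ ({a, w'} : Finset V) := fb ▸ by simp
    simpa [h.w_ne_a] using hw
  · have hbxy : b ∉ ({x, y} : Finset V) := by simp [h.x_ne_b.symm, h.y_ne_b.symm]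
    have hbxy' : b ∉ ({x', y'} : Finset V) := by simp [h'.x_ne_b.symm, h'.y_ne_b.symm]
    rw [← erase_insert hbxy, ← erase_insert hbxy', fa]

end IsWye

lemma IsAcyclic.nonempty_induce_iso_wyeGraph_iff [DecidableEq V] (hG : G.IsAcyclic)
    {s : Finset V} :
    Nonempty (G.induce (s : Set V) ≃g wyeGraph) ↔
      ∃ a b w x y, G.IsWye a b w x y ∧ s = {a, b, w, x, y} := by
  rw [nonempty_induce_iso_iff]
  constructor
  · rintro ⟨f, hf⟩
    refine ⟨f 0, f 3, f 4, f 1, f 2, .of_embedding f, coe_injective ?_⟩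
    rw [← hf]
    ext v
    simp only [Set.mem_range, eq_comm, Fin.exists_fin_succ, Fin.isValue, Fin.succ_zero_eq_one,
      Fin.succ_one_eq_two, Fin.reduceSucc, IsEmpty.exists_iff, or_false, coe_insert,
      coe_singleton, Set.mem_insert_iff, Set.mem_singleton_iff]
    tauto
  · rintro ⟨a, b, w, x, y, h, rfl⟩
    simpa using h.exists_embedding hG

variable [Fintype V] [DecidableEq V] [DecidableRel G.Adj]

variable (G) in
def wyeLegs (a b : V) : Finset (V × Finset V) :=
  (G.neighborFinset b).erase a ×ˢ ((G.neighborFinset a).erase b).powersetCard 2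

lemma mem_wyeLegs {a b w : V} {p : Finset V} (hab : G.Adj a b) :
    (w, p) ∈ G.wyeLegs a b ↔ ∃ x y, G.IsWye a b w x y ∧ p = {x, y} := by
  simp only [wyeLegs, mem_product, mem_erase, mem_neighborFinset, mem_powersetCard, card_eq_two]
  constructor
  · rintro ⟨⟨hwa, hbw⟩, hp, x, y, hxy, rfl⟩
    have hx := hp (by simp : x ∈ ({x, y} : Finset V))
    have hy := hp (by simp : y ∈ ({x, y} : Finset V))
    simp only [mem_erase, mem_neighborFinset] at hx hy
    exact ⟨x, y, ⟨hab, hbw, hx.2, hy.2, hwa, hx.1, hy.1, hxy⟩, rfl⟩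
  · rintro ⟨x, y, h, rfl⟩
    refine ⟨⟨h.w_ne_a, h.adj_bw⟩, ?_, x, y, h.x_ne_y, rfl⟩
    simp [insert_subset_iff, h.x_ne_b, h.y_ne_b, h.adj_ax, h.adj_ay]

lemma card_wyeLegs {a b : V} (hab : G.Adj a b) :
    #(G.wyeLegs a b) = (G.degree a - 1).choose 2 * (G.degree b - 1) := by
  rw [wyeLegs, card_product, card_powersetCard, mul_comm,
    card_erase_of_mem ((mem_neighborFinset _ _ _).2 hab.symm),
    card_erase_of_mem ((mem_neighborFinset _ _ _).2 hab),
    card_neighborFinset_eq_degree, card_neighborFinset_eq_degree]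

theorem IsAcyclic.copyCount_wyeGraph (hG : G.IsAcyclic) :
    _root_.copyCount G wyeGraph = ∑ p ∈ univ.filter (fun p : V × V => G.Adj p.1 p.2),
      (G.degree p.1 - 1).choose 2 * (G.degree p.2 - 1) := by
  classical
  calc _root_.copyCount G wyeGraph
      = #(univ.filter fun s : Finset V =>
          ∃ a b w x y, G.IsWye a b w x y ∧ s = {a, b, w, x, y}) := by
        rw [_root_.copyCount, Nat.card_congr (Equiv.subtypeEquivRight
          fun s => hG.nonempty_induce_iso_wyeGraph_iff), Nat.card_eq_fintype_card,
          Fintype.card_subtype]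
    _ = #((univ.filter fun p : V × V => G.Adj p.1 p.2).sigma fun p => G.wyeLegs p.1 p.2) := by
        symm
        apply card_bij fun c _ => insert c.1.1 (insert c.1.2 (insert c.2.1 c.2.2))
        · rintro ⟨⟨a, b⟩, w, p⟩ hc
          simp only [mem_sigma, mem_filter, mem_univ, true_and] at hc ⊢
          obtain ⟨x, y, h, rfl⟩ := (mem_wyeLegs hc.1).1 hc.2
          exact ⟨a, b, w, x, y, h, rfl⟩
        · rintro ⟨⟨a, b⟩, w, p⟩ hc ⟨⟨a', b'⟩, w', p'⟩ hc' hs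
          simp only [mem_sigma, mem_filter, mem_univ, true_and] at hc hc'
          obtain ⟨x, y, h, rfl⟩ := (mem_wyeLegs hc.1).1 hc.2
          obtain ⟨x', y', h', rfl⟩ := (mem_wyeLegs hc'.1).1 hc'.2
          obtain ⟨rfl, rfl, rfl, hp⟩ := h.eq_of_vertices_eq hG h' hs
          rw [hp]
        · intro s hs
          obtain ⟨a, b, w, x, y, h, rfl⟩ := (mem_filter.1 hs).2
          refine ⟨⟨(a, b), (w, {x, y})⟩, ?_, rfl⟩
          simp only [mem_sigma, mem_filter, mem_univ, true_and, mem_wyeLegs h.adj_ab]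
          exact ⟨h.adj_ab, x, y, h, rfl⟩
    _ = _ := by
        rw [card_sigma]
        exact sum_congr rfl fun p hp => card_wyeLegs (mem_filter.1 hp).2

end SimpleGraph

theorem wye_count_oriented {V : Type*} [Fintype V] [DecidableEq V] (G : SimpleGraph V)
    [DecidableRel G.Adj] (hG : G.IsTree) (r : V) :
    _root_.copyCount G wyeGraph =
      ∑ v, ∑ u ∈ Finset.univ.filter (fun u => G.Adj v u ∧ G.dist r u = G.dist r v + 1),
        ((G.degree u - 1).choose 2 * (G.degree v - 1) +
          (G.degree v - 1).choose 2 * (G.degree u - 1)) := by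
  rw [hG.isAcyclic.copyCount_wyeGraph]
  exact (hG.sum_adj_eq_sum_children r
    fun a b => (G.degree a - 1).choose 2 * (G.degree b - 1)).trans
      (sum_congr rfl fun v _ => sum_congr rfl fun u _ => add_comm _ _)
end
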